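/- arXiv:2408.13323 — 2 statements merged into one kernel-verified Lean document; each statement's English description precedes it below -/
import Mathlib

section
/- Under the Basic Assumption, suppose θ^ν·|τ^ν − τ| → 0 and there exists an optimal solution (x*, y*) of (P) such that the value function V is calm at x*. If the sequence {θ^ν} is bounded away from zero, then limsup_{ν→∞} 𝔪^ν ≤ 𝔪 and 𝔪 is a real number. -/
/-!
Calmness of `V` at `x*` with modulus `λ*` makes the lower-level constraint an exact penalty at
`x*`: `g(x*,y*) - τ ≤ g(x*,z) + λ* dist(H(x*,z), D)` for every `z ∈ Y`. Once `λ̄^ν ≥ λ*`, the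
point `(x*, y*, u, α, λ*)`, with `u` a shortest correction putting `H^ν(x*,y*) + u` into `D` and
`α` absorbing the approximation errors, is feasible for (P)^ν, so
`𝔪^ν ≤ f^ν(x*,y*) + σ^ν η^ν + θ^ν (2δ^ν + λ* η^ν + |τ^ν - τ|)`. The error term tends to zero
and `limsup f^ν(x*,y*) ≤ f(x*,y*) = 𝔪`.
-/

open Filter Topology Metric Set

attribute [local instance] Classical.propDecidable

noncomputable section

/-- `ℝ^n` with the Euclidean norm. -/
abbrev Rn (n : ℕ) : Type := EuclideanSpace ℝ (Fin n)

variable {n m : ℕ} {Q : Type*} [NormedAddCommGroup Q]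

/-- `(x, y)` is feasible in the bilevel problem (P): `x ∈ X` and
`y ∈ τ-argmin_{z ∈ Y} { g(x,z) | H(x,z) ∈ D }`. -/
def PFeas (X : Set (Rn n)) (Y : Set (Rn m)) (D : Set Q)
    (g : Rn n × Rn m → ℝ) (H : Rn n × Rn m → Q) (τ : ℝ)
    (x : Rn n) (y : Rn m) : Prop :=
  x ∈ X ∧ y ∈ Y ∧ H (x, y) ∈ D ∧
    ∀ z ∈ Y, H (x, z) ∈ D → g (x, y) ≤ g (x, z) + τ

/-- The minimum value `𝔪` of (P). -/
def PVal (X : Set (Rn n)) (Y : Set (Rn m)) (D : Set Q)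
    (f : Rn n × Rn m → EReal) (g : Rn n × Rn m → ℝ) (H : Rn n × Rn m → Q)
    (τ : ℝ) : EReal :=
  ⨅ (x : Rn n) (y : Rn m) (_ : PFeas X Y D g H τ x y), f (x, y)

/-- Optimal solution of (P): feasible, finite objective value attaining `𝔪`. -/
def POpt (X : Set (Rn n)) (Y : Set (Rn m)) (D : Set Q)
    (f : Rn n × Rn m → EReal) (g : Rn n × Rn m → ℝ) (H : Rn n × Rn m → Q)
    (τ : ℝ) (x : Rn n) (y : Rn m) : Prop :=
  PFeas X Y D g H τ x y ∧ f (x, y) ≠ ⊤ ∧ f (x, y) = PVal X Y D f g H τ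

/-- Feasibility in the alternative problem (P)^ν with data `Yn, gn, Hn, lamBar, τn`. -/
def PnuFeas (X : Set (Rn n)) (Y : Set (Rn m)) (D : Set Q) (Yn : Set (Rn m))
    (gn : Rn n × Rn m → ℝ) (Hn : Rn n × Rn m → Q) (lamBar τn : ℝ)
    (x : Rn n) (y : Rn m) (u : Q) (α lam : ℝ) : Prop :=
  x ∈ X ∧ y ∈ Y ∧ α ≤ 0 ∧ 0 ≤ lam ∧ lam ≤ lamBar ∧ Hn (x, y) + u ∈ D ∧
    ∀ z ∈ Yn, gn (x, y) + α ≤ gn (x, z) + lam * infDist (Hn (x, z)) D + τn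

/-- Objective function of (P)^ν: `f^ν(x,y) + σ^ν ‖u‖ - θ^ν α`. -/
def PnuObj (fn : Rn n × Rn m → EReal) (σn θn : ℝ)
    (x : Rn n) (y : Rn m) (u : Q) (α : ℝ) : EReal :=
  fn (x, y) + ((σn * ‖u‖ - θn * α : ℝ) : EReal)

/-- The minimum value `𝔪^ν` of (P)^ν. -/
def PnuVal (X : Set (Rn n)) (Y : Set (Rn m)) (D : Set Q) (Yn : Set (Rn m))
    (fn : Rn n × Rn m → EReal) (gn : Rn n × Rn m → ℝ) (Hn : Rn n × Rn m → Q)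
    (σn θn lamBar τn : ℝ) : EReal :=
  ⨅ (x : Rn n) (y : Rn m) (u : Q) (α : ℝ) (lam : ℝ)
    (_ : PnuFeas X Y D Yn gn Hn lamBar τn x y u α lam),
    PnuObj fn σn θn x y u α

/-- `ε`-optimal solution of (P)^ν: feasible with finite objective value at most `𝔪^ν + ε`. -/
def PnuEps (X : Set (Rn n)) (Y : Set (Rn m)) (D : Set Q) (Yn : Set (Rn m))
    (fn : Rn n × Rn m → EReal) (gn : Rn n × Rn m → ℝ) (Hn : Rn n × Rn m → Q)
    (σn θn lamBar τn ε : ℝ)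
    (x : Rn n) (y : Rn m) (u : Q) (α lam : ℝ) : Prop :=
  PnuFeas X Y D Yn gn Hn lamBar τn x y u α lam ∧
    PnuObj fn σn θn x y u α ≠ ⊤ ∧
    PnuObj fn σn θn x y u α ≤ PnuVal X Y D Yn fn gn Hn σn θn lamBar τn + (ε : EReal)

/-- The value function `V(x,u) = inf_{y ∈ Y} { g(x,y) | H(x,y) + u ∈ D }`. -/
def Vfun (Y : Set (Rn m)) (D : Set Q)
    (g : Rn n × Rn m → ℝ) (H : Rn n × Rn m → Q)
    (x : Rn n) (u : Q) : EReal :=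
  ⨅ (y : Rn m) (_ : y ∈ Y ∧ H (x, y) + u ∈ D), (g (x, y) : EReal)

/-- The value function `V` is calm at `x` with penalty threshold `lam`. -/
def CalmAtWith (Y : Set (Rn m)) (D : Set Q)
    (g : Rn n × Rn m → ℝ) (H : Rn n × Rn m → Q)
    (x : Rn n) (lam : ℝ) : Prop :=
  0 ≤ lam ∧ ∀ u : Q,
    Vfun Y D g H x 0 - ((lam * ‖u‖ : ℝ) : EReal) ≤ Vfun Y D g H x u

/-- The value function `V` is calm at `x`. -/
def CalmAt (Y : Set (Rn m)) (D : Set Q)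
    (g : Rn n × Rn m → ℝ) (H : Rn n × Rn m → Q) (x : Rn n) : Prop :=
  ∃ lam : ℝ, CalmAtWith Y D g H x lam

/-- The value function `V` is locally calm at `xbar`. -/
def LocallyCalmAt (Y : Set (Rn m)) (D : Set Q)
    (g : Rn n × Rn m → ℝ) (H : Rn n × Rn m → Q) (xbar : Rn n) : Prop :=
  ∃ lam ρ : ℝ, 0 ≤ lam ∧ 0 < ρ ∧
    ∀ x ∈ Metric.closedBall xbar ρ, ∀ u : Q,
      Vfun Y D g H x 0 - ((lam * ‖u‖ : ℝ) : EReal) ≤ Vfun Y D g H x u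

/-- The penalty-based value function `μ(x,λ) = inf_{y ∈ S} [g(x,y) + λ dist(H(x,y), D)]`. -/
def muSet (S : Set (Rn m)) (D : Set Q)
    (g : Rn n × Rn m → ℝ) (H : Rn n × Rn m → Q)
    (x : Rn n) (lam : ℝ) : EReal :=
  ⨅ (y : Rn m) (_ : y ∈ S), ((g (x, y) + lam * infDist (H (x, y)) D : ℝ) : EReal)

/-- The Basic Assumption (Assumption 2.1). -/
structure BasicAssumption (X : Set (Rn n)) (Y : Set (Rn m)) (D : Set Q)
    (Yν : ℕ → Set (Rn m))
    (f : Rn n × Rn m → EReal) (fν : ℕ → Rn n × Rn m → EReal)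
    (g : Rn n × Rn m → ℝ) (gν : ℕ → Rn n × Rn m → ℝ)
    (H : Rn n × Rn m → Q) (Hν : ℕ → Rn n × Rn m → Q)
    (σ θ lamBar τν δ η : ℕ → ℝ) : Prop where
  X_nonempty : X.Nonempty
  X_closed : IsClosed X
  Y_nonempty : Y.Nonempty
  Y_closed : IsClosed Y
  D_nonempty : D.Nonempty
  D_closed : IsClosed D
  Yν_nonempty : ∀ ν, (Yν ν).Nonempty
  Yν_subset : ∀ ν, Yν ν ⊆ Y
  Yν_conv : ∀ y : Rn m,
    Tendsto (fun ν => infDist y (Yν ν)) atTop (𝓝 (infDist y Y))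
  δ_lim : Tendsto δ atTop (𝓝 0)
  g_err : ∀ ν, ∀ x ∈ X, ∀ y ∈ Y, |gν ν (x, y) - g (x, y)| ≤ δ ν
  g_cont : ContinuousOn g (X ×ˢ Y)
  η_lim : Tendsto η atTop (𝓝 0)
  H_err : ∀ ν, ∀ x ∈ X, ∀ y ∈ Y,
    |infDist (Hν ν (x, y)) D - infDist (H (x, y)) D| ≤ η ν
  H_cont : ContinuousOn H (X ×ˢ Y)
  f_ne_bot : ∀ p, f p ≠ ⊥
  fν_ne_bot : ∀ ν p, fν ν p ≠ ⊥
  f_limsup : ∀ x ∈ X, ∀ y ∈ Y,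
    limsup (fun ν => fν ν (x, y)) atTop ≤ f (x, y)
  f_liminf : ∀ x ∈ X, ∀ y ∈ Y, ∀ (xs : ℕ → Rn n) (ys : ℕ → Rn m),
    (∀ ν, xs ν ∈ X) → (∀ ν, ys ν ∈ Y) →
    Tendsto xs atTop (𝓝 x) → Tendsto ys atTop (𝓝 y) →
    f (x, y) ≤ liminf (fun ν => fν ν (xs ν, ys ν)) atTop
  σ_nonneg : ∀ ν, 0 ≤ σ ν
  θ_nonneg : ∀ ν, 0 ≤ θ ν
  lamBar_nonneg : ∀ ν, 0 ≤ lamBar ν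
  τν_nonneg : ∀ ν, 0 ≤ τν ν
  lamBar_top : Tendsto lamBar atTop atTop
  ση_lim : Tendsto (fun ν => σ ν * η ν) atTop (𝓝 0)
  θlamη_lim : Tendsto (fun ν => θ ν * lamBar ν * η ν) atTop (𝓝 0)
  θδ_lim : Tendsto (fun ν => θ ν * δ ν) atTop (𝓝 0)

theorem le_mul_infDist_of_forall_le_mul_dist {α : Type*} [PseudoMetricSpace α] {s : Set α}
    {x : α} {a c : ℝ} (hc : 0 ≤ c) (hs : s.Nonempty) (h : ∀ d ∈ s, a ≤ c * dist x d) :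
    a ≤ c * infDist x s := by
  rcases hc.eq_or_lt with rfl | hc
  · obtain ⟨d, hd⟩ := hs
    simpa using h d hd
  · rw [← div_le_iff₀' hc, le_infDist hs]
    exact fun d hd => (div_le_iff₀' hc).2 (h d hd)

theorem exists_add_mem_norm_eq_infDist {E : Type*} [NormedAddCommGroup E] [ProperSpace E]
    {s : Set E} (hs : IsClosed s) (hne : s.Nonempty) (a : E) :
    ∃ u, a + u ∈ s ∧ ‖u‖ = infDist a s := by
  obtain ⟨d, hd, hdist⟩ := hs.exists_infDist_eq_dist hne a
  exact ⟨d - a, by rwa [add_sub_cancel], by rw [hdist, dist_comm, dist_eq_norm]⟩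

theorem tendsto_zero_of_mul_tendsto_zero_of_tendsto_atTop {ι : Type*} {l : Filter ι}
    {a b : ι → ℝ} (ha : ∀ᶠ i in l, 0 ≤ a i) (hb : Tendsto b l atTop)
    (hab : Tendsto (fun i => a i * b i) l (𝓝 0)) : Tendsto a l (𝓝 0) := by
  refine tendsto_of_tendsto_of_tendsto_of_le_of_le' tendsto_const_nhds hab ha ?_
  filter_upwards [ha, hb.eventually_ge_atTop 1] with i h0 h1
  exact le_mul_of_one_le_right h0 h1

theorem EReal.limsup_le_of_le_add_of_tendsto_zero {ι : Type*} {l : Filter ι} [l.NeBot]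
    {a b : ι → EReal} {e : ι → ℝ} (hab : ∀ᶠ i in l, a i ≤ b i + e i)
    (he : Tendsto e l (𝓝 0)) : limsup a l ≤ limsup b l := by
  have he' : limsup (fun i => (e i : EReal)) l = 0 :=
    (EReal.tendsto_coe.2 he).limsup_eq
  calc limsup a l ≤ limsup (b + fun i => (e i : EReal)) l := limsup_le_limsup hab
    _ ≤ limsup b l + limsup (fun i => (e i : EReal)) l :=
      EReal.limsup_add_le (Or.inr (by simp [he'])) (Or.inr (by simp [he']))
    _ = limsup b l := by rw [he', add_zero]

section

variable {X : Set (Rn n)} {Y Yn : Set (Rn m)} {D : Set Q}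
  {g gn : Rn n × Rn m → ℝ} {H Hn : Rn n × Rn m → Q} {τ : ℝ} {x : Rn n} {y z : Rn m}

theorem PFeas.sub_le_Vfun_zero (h : PFeas X Y D g H τ x y) :
    ((g (x, y) - τ : ℝ) : EReal) ≤ Vfun Y D g H x 0 :=
  le_iInf₂ fun z hz => EReal.coe_le_coe_iff.2 <| by
    linarith [h.2.2.2 z hz.1 (by simpa using hz.2)]

theorem Vfun_le_of_add_mem {u : Q} (hz : z ∈ Y) (hu : H (x, z) + u ∈ D) :
    Vfun Y D g H x u ≤ g (x, z) :=
  iInf₂_le z ⟨hz, hu⟩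

theorem PFeas.sub_le_add_mul_infDist_of_calmAtWith {lam : ℝ} (hfeas : PFeas X Y D g H τ x y)
    (hcalm : CalmAtWith Y D g H x lam) (hz : z ∈ Y) :
    g (x, y) - τ ≤ g (x, z) + lam * infDist (H (x, z)) D := by
  suffices h : ∀ d ∈ D, g (x, y) - τ - g (x, z) ≤ lam * dist (H (x, z)) d by
    linarith [le_mul_infDist_of_forall_le_mul_dist hcalm.1 ⟨_, hfeas.2.2.1⟩ h]
  intro d hd
  have hV : Vfun Y D g H x 0 ≤ ((g (x, z) + lam * dist (H (x, z)) d : ℝ) : EReal) := by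
    have hcorr := (hcalm.2 (d - H (x, z))).trans
      (Vfun_le_of_add_mem (g := g) hz (by rwa [add_sub_cancel]))
    rwa [EReal.sub_le_iff_le_add (by simp) (by simp), ← EReal.coe_add, ← dist_eq_norm,
      dist_comm] at hcorr
  linarith [EReal.coe_le_coe_iff.1 (hfeas.sub_le_Vfun_zero.trans hV)]

variable {fn : Rn n × Rn m → EReal} {σn θn lamBar τn δn ηn lam α : ℝ} {u : Q}

theorem PnuVal_le_PnuObj (h : PnuFeas X Y D Yn gn Hn lamBar τn x y u α lam) :
    PnuVal X Y D Yn fn gn Hn σn θn lamBar τn ≤ PnuObj fn σn θn x y u α :=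
  iInf_le_of_le x <| iInf_le_of_le y <| iInf_le_of_le u <| iInf_le_of_le α <|
    iInf_le_of_le lam <| iInf_le _ h

theorem PnuFeas.of_exact_penalty (hx : x ∈ X) (hy : y ∈ Y) (hYn : Yn ⊆ Y)
    (hpen : ∀ z ∈ Y, g (x, y) - τ ≤ g (x, z) + lam * infDist (H (x, z)) D)
    (hlam : 0 ≤ lam) (hlamBar : lam ≤ lamBar)
    (hg : ∀ z ∈ Y, |gn (x, z) - g (x, z)| ≤ δn)
    (hH : ∀ z ∈ Y, |infDist (Hn (x, z)) D - infDist (H (x, z)) D| ≤ ηn)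
    (hu : Hn (x, y) + u ∈ D) (hα0 : α ≤ 0) (hα : α ≤ τn - τ - (2 * δn + lam * ηn)) :
    PnuFeas X Y D Yn gn Hn lamBar τn x y u α lam := by
  refine ⟨hx, hy, hα0, hlam, hlamBar, hu, fun z hzn => ?_⟩
  have hz := hYn hzn
  have hgy := abs_le.1 (hg y hy)
  have hgz := abs_le.1 (hg z hz)
  have hHz : lam * infDist (H (x, z)) D ≤ lam * infDist (Hn (x, z)) D + lam * ηn := by
    rw [← mul_add]
    exact mul_le_mul_of_nonneg_left (by linarith [(abs_le.1 (hH z hz)).1]) hlam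
  linarith [hpen z hz]

theorem PnuVal_le_add_of_exact_penalty [ProperSpace Q] (hD : IsClosed D)
    (hfeas : PFeas X Y D g H τ x y)
    (hpen : ∀ z ∈ Y, g (x, y) - τ ≤ g (x, z) + lam * infDist (H (x, z)) D)
    (hlam : 0 ≤ lam) (hlamBar : lam ≤ lamBar) (hYn : Yn ⊆ Y)
    (hg : ∀ z ∈ Y, |gn (x, z) - g (x, z)| ≤ δn)
    (hH : ∀ z ∈ Y, |infDist (Hn (x, z)) D - infDist (H (x, z)) D| ≤ ηn)
    (hσ : 0 ≤ σn) (hθ : 0 ≤ θn) :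
    PnuVal X Y D Yn fn gn Hn σn θn lamBar τn ≤
      fn (x, y) + ((σn * ηn + θn * (2 * δn + lam * ηn + |τn - τ|) : ℝ) : EReal) := by
  obtain ⟨hx, hy, hHD, -⟩ := hfeas
  obtain ⟨u, hu, hnorm⟩ := exists_add_mem_norm_eq_infDist hD ⟨_, hHD⟩ (Hn (x, y))
  have hδ : 0 ≤ δn := (abs_nonneg _).trans (hg y hy)
  have hη : 0 ≤ ηn := (abs_nonneg _).trans (hH y hy)
  have hu_le : ‖u‖ ≤ ηn := by
    have := hH y hy
    rwa [infDist_zero_of_mem hHD, sub_zero, abs_of_nonneg infDist_nonneg, ← hnorm] at this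
  set α := min 0 (τn - τ - (2 * δn + lam * ηn))
  have hα : -α ≤ 2 * δn + lam * ηn + |τn - τ| :=
    neg_le.1 (le_min (by linarith [mul_nonneg hlam hη, abs_nonneg (τn - τ)])
      (by linarith [neg_abs_le (τn - τ)]))
  refine (PnuVal_le_PnuObj (PnuFeas.of_exact_penalty hx hy hYn hpen hlam hlamBar hg hH hu
    (min_le_left _ _) (min_le_right _ _))).trans ?_
  unfold PnuObj
  gcongr
  nlinarith [mul_le_mul_of_nonneg_left hu_le hσ, mul_le_mul_of_nonneg_left hα hθ]

end

theorem Pnu_limsup_le_PVal_of_calm_general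
    [NormedSpace ℝ Q] [FiniteDimensional ℝ Q]
    (X : Set (Rn n)) (Y : Set (Rn m)) (D : Set Q) (Yν : ℕ → Set (Rn m))
    (f : Rn n × Rn m → EReal) (fν : ℕ → Rn n × Rn m → EReal)
    (g : Rn n × Rn m → ℝ) (gν : ℕ → Rn n × Rn m → ℝ)
    (H : Rn n × Rn m → Q) (Hν : ℕ → Rn n × Rn m → Q)
    (σ θ lamBar τν δ η : ℕ → ℝ) (τ : ℝ)
    (ba : BasicAssumption X Y D Yν f fν g gν H Hν σ θ lamBar τν δ η)
    (hrate : Tendsto (fun ν => θ ν * |τν ν - τ|) atTop (𝓝 0))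
    (xstar : Rn n) (ystar : Rn m)
    (hopt : POpt X Y D f g H τ xstar ystar)
    (hcalm : CalmAt Y D g H xstar) :
    limsup (fun ν =>
        PnuVal X Y D (Yν ν) (fν ν) (gν ν) (Hν ν) (σ ν) (θ ν) (lamBar ν) (τν ν)) atTop
      ≤ PVal X Y D f g H τ ∧
    ∃ r : ℝ, PVal X Y D f g H τ = (r : EReal) := by
  obtain ⟨lam, hcalm⟩ := hcalm
  obtain ⟨hfeas, hftop, hfval⟩ := hopt
  have hx := hfeas.1
  refine ⟨?_, _, by rw [← hfval, EReal.coe_toReal hftop (ba.f_ne_bot _)]⟩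
  have hθη : Tendsto (fun ν => θ ν * η ν) atTop (𝓝 0) :=
    tendsto_zero_of_mul_tendsto_zero_of_tendsto_atTop
      (.of_forall fun ν => mul_nonneg (ba.θ_nonneg ν)
        ((abs_nonneg _).trans (ba.H_err ν _ hx _ hfeas.2.1)))
      ba.lamBar_top (ba.θlamη_lim.congr fun ν => by ring)
  have herr : Tendsto (fun ν => σ ν * η ν + θ ν * (2 * δ ν + lam * η ν + |τν ν - τ|)) atTop
      (𝓝 0) := by
    have h := ba.ση_lim.add (((ba.θδ_lim.const_mul 2).add (hθη.const_mul lam)).add hrate)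
    simp only [mul_zero, add_zero] at h
    exact h.congr fun ν => by ring
  rw [← hfval]
  refine (EReal.limsup_le_of_le_add_of_tendsto_zero ?_ herr).trans
    (ba.f_limsup _ hx _ hfeas.2.1)
  filter_upwards [ba.lamBar_top.eventually_ge_atTop lam] with ν hν
  exact PnuVal_le_add_of_exact_penalty ba.D_closed hfeas
    (fun z hz => hfeas.sub_le_add_mul_infDist_of_calmAtWith hcalm hz) hcalm.1 hν
    (ba.Yν_subset ν) (ba.g_err ν _ hx) (ba.H_err ν _ hx) (ba.σ_nonneg ν) (ba.θ_nonneg ν)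

/-- Theorem 2.5(a): under calmness at an optimal solution, `limsup 𝔪^ν ≤ 𝔪 ∈ ℝ`. -/
theorem Pnu_limsup_le_PVal_of_calm
    [NormedSpace ℝ Q] [FiniteDimensional ℝ Q]
    (X : Set (Rn n)) (Y : Set (Rn m)) (D : Set Q) (Yν : ℕ → Set (Rn m))
    (f : Rn n × Rn m → EReal) (fν : ℕ → Rn n × Rn m → EReal)
    (g : Rn n × Rn m → ℝ) (gν : ℕ → Rn n × Rn m → ℝ)
    (H : Rn n × Rn m → Q) (Hν : ℕ → Rn n × Rn m → Q)
    (σ θ lamBar τν δ η : ℕ → ℝ) (τ : ℝ) (hτ : 0 ≤ τ)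
    (ba : BasicAssumption X Y D Yν f fν g gν H Hν σ θ lamBar τν δ η)
    (hrate : Tendsto (fun ν => θ ν * |τν ν - τ|) atTop (𝓝 0))
    (xstar : Rn n) (ystar : Rn m)
    (hopt : POpt X Y D f g H τ xstar ystar)
    (hcalm : CalmAt Y D g H xstar)
    (hθ : ∃ c : ℝ, 0 < c ∧ ∀ ν, c ≤ θ ν) :
    limsup (fun ν =>
        PnuVal X Y D (Yν ν) (fν ν) (gν ν) (Hν ν) (σ ν) (θ ν) (lamBar ν) (τν ν)) atTop
      ≤ PVal X Y D f g H τ ∧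
    ∃ r : ℝ, PVal X Y D f g H τ = (r : EReal) :=
  Pnu_limsup_le_PVal_of_calm_general X Y D Yν f fν g gν H Hν σ θ lamBar τν δ η τ ba hrate xstar
    ystar hopt hcalm
end
end

section
/- Under the Basic Assumption, suppose θ^ν·|τ^ν − τ| → 0, σ^ν, θ^ν → ∞, there exists an optimal solution (x*, y*) of (P) such that the value function V is calm at x* with penalty threshold λ* ∈ [0,∞), and there is a compact set B ⊂ ℝ^{n+m+q+2} such that for each ν there exists an optimal solution of (P)^ν in B. Then for any λ ∈ [λ*, ∞) there exist a vanishing sequence {ε^ν ∈ [0,∞)} and points w^ν ∈ ℝ^{n+m+q+2} such that w^ν is an ε^ν-optimal solution of (P)^ν and w^ν → (x*, y*, 0, 0, λ); moreover lim_{ν→∞} 𝔪^ν = 𝔪 and 𝔪 is a real number. -/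
open Filter Topology Metric Set

attribute [local instance] Classical.propDecidable

noncomputable section

variable {n m : ℕ} {Q : Type*} [NormedAddCommGroup Q]

/-!
Calmness of `V` at `x*` with modulus `λ` turns the `τ`-optimality of `y*` into the penalized
inequality `g(x*,y*) ≤ g(x*,z) + λ dist(H(x*,z), D) + τ` for all `z ∈ Y`. Hence, once
`λ ≤ λ̄^ν`, the point `(x*, y*, u^ν, α^ν, λ)` with small corrections `u^ν`, `α^ν` is feasible for
`(P)^ν`, and by the rate conditions its objective value tends to `f(x*,y*) = 𝔪`; so
`limsup 𝔪^ν ≤ 𝔪`. Conversely, if `𝔪^ν < c < 𝔪` infinitely often, a subsequence of the optimal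
solutions in `B` converges; the penalties `σ^ν, θ^ν → ∞` force `u, α → 0`, so the limit is feasible
for `(P)` with objective value at most `c`, which is absurd. Thus `𝔪^ν → 𝔪`, and the points above
are `ε^ν`-optimal with `ε^ν → 0`.
-/

theorem tendsto_zero_of_mul_le {ι : Type*} {l : Filter ι} {a v : ι → ℝ} {C : ℝ}
    (ha : Tendsto a l atTop) (hv : ∀ᶠ i in l, 0 ≤ v i) (hC : ∀ᶠ i in l, a i * v i ≤ C) :
    Tendsto v l (𝓝 0) := by
  refine squeeze_zero' hv (g := fun i => C / a i) ?_ ((tendsto_const_nhds (x := C)).div_atTop ha)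
  filter_upwards [hC, ha.eventually_gt_atTop 0] with i hi hai
  rw [le_div_iff₀ hai, mul_comm]
  exact hi

theorem tendsto_ite_le_of_tendsto {α : Type*} [TopologicalSpace α] {a b : ℕ → α} {p : α}
    (N : ℕ) (h : Tendsto a atTop (𝓝 p)) :
    Tendsto (fun ν => if N ≤ ν then a ν else b ν) atTop (𝓝 p) :=
  h.congr' <| (eventually_ge_atTop N).mono fun _ hν => (if_pos hν).symm

theorem tendsto_extend_const_of_strictMono {α : Type*} [TopologicalSpace α] {s : ℕ → ℕ}
    (hs : StrictMono s) {xs : ℕ → α} {p : α} (h : Tendsto xs atTop (𝓝 p)) :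
    Tendsto (Function.extend s xs fun _ => p) atTop (𝓝 p) := by
  intro U hU
  obtain ⟨K, hK⟩ := eventually_atTop.1 (h hU)
  refine eventually_atTop.2 ⟨s K, fun ν hν => ?_⟩
  by_cases hν' : ∃ k, s k = ν
  · obtain ⟨k, rfl⟩ := hν'
    rw [hs.injective.extend_apply]
    exact hK k (hs.le_iff_le.1 hν)
  · rw [Function.extend_apply' _ _ _ hν']
    exact mem_of_mem_nhds hU

theorem extend_const_mem {α : Type*} {s : ℕ → ℕ} {xs : ℕ → α} {p : α} {S : Set α}
    (hxs : ∀ k, xs k ∈ S) (hp : p ∈ S) (ν : ℕ) : Function.extend s xs (fun _ => p) ν ∈ S := by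
  rw [Function.extend_def]
  split_ifs
  exacts [hxs _, hp]

theorem ContinuousOn.tendsto_comp_prodMk {α β γ ι : Type*} [TopologicalSpace α]
    [TopologicalSpace β] [TopologicalSpace γ] {φ : α × β → γ} {s : Set α} {t : Set β}
    (hφ : ContinuousOn φ (s ×ˢ t)) {l : Filter ι} {xs : ι → α} {ys : ι → β} {a : α} {b : β}
    (ha : a ∈ s) (hb : b ∈ t) (hxs : ∀ i, xs i ∈ s) (hys : ∀ i, ys i ∈ t)
    (hx : Tendsto xs l (𝓝 a)) (hy : Tendsto ys l (𝓝 b)) :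
    Tendsto (fun i => φ (xs i, ys i)) l (𝓝 (φ (a, b))) :=
  (hφ (a, b) ⟨ha, hb⟩).tendsto.comp
    (tendsto_nhdsWithin_iff.2 ⟨hx.prodMk_nhds hy, Eventually.of_forall fun i => ⟨hxs i, hys i⟩⟩)

theorem exists_tendsto_of_tendsto_infDist {α : Type*} [PseudoMetricSpace α] {S : ℕ → Set α}
    (hS : ∀ ν, (S ν).Nonempty) {z : α} (h : Tendsto (fun ν => infDist z (S ν)) atTop (𝓝 0)) :
    ∃ zs : ℕ → α, (∀ ν, zs ν ∈ S ν) ∧ Tendsto zs atTop (𝓝 z) := by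
  have hnear (ν : ℕ) : ∃ z' ∈ S ν, dist z z' < infDist z (S ν) + 1 / ((ν : ℝ) + 1) :=
    (infDist_lt_iff (hS ν)).1 (lt_add_of_pos_right _ Nat.one_div_pos_of_nat)
  choose zs hzS hzd using hnear
  refine ⟨zs, hzS, tendsto_iff_dist_tendsto_zero.2 (squeeze_zero (fun _ => dist_nonneg)
    (fun ν => (dist_comm _ _).trans_le (hzd ν).le) ?_)⟩
  simpa using h.add tendsto_one_div_add_atTop_nhds_zero_nat

section NormedGroup

variable {E : Type*} [SeminormedAddCommGroup E] {D : Set E} {a : E}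

theorem le_mul_infDist_of_forall_add_mem (hD : D.Nonempty) {c l : ℝ} (hl : 0 ≤ l)
    (h : ∀ u, a + u ∈ D → c ≤ l * ‖u‖) : c ≤ l * infDist a D := by
  have : Nonempty D := hD.to_subtype
  rw [infDist_eq_iInf, Real.mul_iInf_of_nonneg hl]
  refine le_ciInf fun p => ?_
  rw [dist_eq_norm']
  exact h _ (by simp)

theorem exists_add_mem_norm_le_two_mul (hDc : IsClosed D) (hD : D.Nonempty) {η : ℝ}
    (h : infDist a D ≤ η) : ∃ u, a + u ∈ D ∧ ‖u‖ ≤ 2 * η := by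
  rcases (infDist_nonneg.trans h).eq_or_lt with hη | hη
  · refine ⟨0, ?_, by simp [← hη]⟩
    rw [add_zero, hDc.mem_iff_infDist_zero hD]
    exact le_antisymm (hη ▸ h) infDist_nonneg
  · obtain ⟨p, hp, hap⟩ := (infDist_lt_iff hD).1 (h.trans_lt (by linarith : η < 2 * η))
    exact ⟨p - a, by simpa using hp, (dist_eq_norm' a p).symm.trans_le hap.le⟩

end NormedGroup

theorem Filter.Tendsto.add_coe_of_tendsto_zero {ι : Type*} {l : Filter ι} {A : ι → EReal}
    {b : ι → ℝ} {a : EReal} (hA : Tendsto A l (𝓝 a)) (hb : Tendsto b l (𝓝 0)) :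
    Tendsto (fun i => A i + b i) l (𝓝 a) := by
  have h := (EReal.continuousAt_add (p := (a, ((0 : ℝ) : EReal))) (Or.inr (EReal.coe_ne_bot 0))
    (Or.inr (EReal.coe_ne_top 0))).tendsto.comp
    (hA.prodMk_nhds ((continuous_coe_real_ereal.tendsto 0).comp hb))
  simpa [Function.comp_def] using h

theorem EReal.exists_le_add_of_tendsto {a b : ℕ → EReal} {r : ℝ}
    (ha : Tendsto a atTop (𝓝 r)) (hb : Tendsto b atTop (𝓝 r)) :
    ∃ ε : ℕ → ℝ, (∀ ν, 0 ≤ ε ν) ∧ Tendsto ε atTop (𝓝 0) ∧ ∀ᶠ ν in atTop, a ν ≤ b ν + ε ν := by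
  have hreal {c : ℕ → EReal} (hc : Tendsto c atTop (𝓝 r)) :
      Tendsto (fun ν => (c ν).toReal) atTop (𝓝 r) := by
    have := (EReal.tendsto_toReal (EReal.coe_ne_top r) (EReal.coe_ne_bot r)).comp hc
    rwa [EReal.toReal_coe] at this
  refine ⟨fun ν => max 0 ((a ν).toReal - (b ν).toReal), fun ν => le_max_left _ _, ?_, ?_⟩
  · simpa using (tendsto_const_nhds (x := (0 : ℝ))).max ((hreal ha).sub (hreal hb))
  filter_upwards [ha.eventually_ne (EReal.coe_ne_top r), hb.eventually_ne (EReal.coe_ne_top r),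
    hb.eventually_ne (EReal.coe_ne_bot r)] with ν haν hbν hbν'
  calc a ν ≤ ((a ν).toReal : EReal) := EReal.le_coe_toReal haν
    _ ≤ (((b ν).toReal + max 0 ((a ν).toReal - (b ν).toReal) : ℝ) : EReal) :=
        EReal.coe_le_coe_iff.2 (by linarith [le_max_right 0 ((a ν).toReal - (b ν).toReal)])
    _ = b ν + (max 0 ((a ν).toReal - (b ν).toReal) : ℝ) := by
        rw [EReal.coe_add, EReal.coe_toReal hbν hbν']

theorem EReal.exists_eventually_le_of_add_le {ι : Type*} {l : Filter ι} {A : ι → EReal}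
    {p : ι → ℝ} {c : EReal} (hc : c ≠ ⊤) (hA : ⊥ < liminf A l) (h : ∀ i, A i + p i ≤ c) :
    ∃ C : ℝ, ∀ᶠ i in l, p i ≤ C := by
  obtain ⟨d, -, hdA⟩ := EReal.exists_between_coe_real hA
  refine ⟨c.toReal - d, ?_⟩
  filter_upwards [eventually_lt_of_lt_liminf hdA] with i hi
  have : ((d + p i : ℝ) : EReal) ≤ c.toReal := by
    rw [EReal.coe_add]
    exact (add_le_add hi.le le_rfl).trans ((h i).trans (EReal.le_coe_toReal hc))
  linarith [EReal.coe_le_coe_iff.1 this]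

theorem add_sub_le_add_mul_add_of_abs_sub_le {a a' b b' d d' α l t δ η : ℝ}
    (ha : |a' - a| ≤ δ) (hb : |b' - b| ≤ δ) (hd : |d' - d| ≤ η) (hl : 0 ≤ l)
    (h : a + α ≤ b + l * d + t) : a' + (α - (2 * δ + l * η)) ≤ b' + l * d' + t := by
  have := mul_le_mul_of_nonneg_left (abs_le.1 hd).1 hl
  linarith [abs_le.1 ha, abs_le.1 hb]

theorem PnuVal_le_of_pnuFeas {X : Set (Rn n)} {Y : Set (Rn m)} {D : Set Q} {Yn : Set (Rn m)}
    {fn : Rn n × Rn m → EReal} {gn : Rn n × Rn m → ℝ} {Hn : Rn n × Rn m → Q}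
    {σn θn lamBar τn : ℝ} {x : Rn n} {y : Rn m} {u : Q} {α lam : ℝ}
    (h : PnuFeas X Y D Yn gn Hn lamBar τn x y u α lam) :
    PnuVal X Y D Yn fn gn Hn σn θn lamBar τn ≤ PnuObj fn σn θn x y u α :=
  iInf_le_of_le x <| iInf_le_of_le y <| iInf_le_of_le u <| iInf_le_of_le α <|
    iInf_le_of_le lam <| iInf_le _ h

namespace CalmAtWith

variable {X : Set (Rn n)} {Y : Set (Rn m)} {D : Set Q} {g : Rn n × Rn m → ℝ}
  {H : Rn n × Rn m → Q} {x : Rn n} {lam : ℝ}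

theorem mono (h : CalmAtWith Y D g H x lam) {lam' : ℝ} (hle : lam ≤ lam') :
    CalmAtWith Y D g H x lam' :=
  ⟨h.1.trans hle, fun u => (EReal.sub_le_sub le_rfl
    (EReal.coe_le_coe_iff.2 (mul_le_mul_of_nonneg_right hle (norm_nonneg u)))).trans (h.2 u)⟩

theorem le_add_mul_infDist (hcalm : CalmAtWith Y D g H x lam) {τ : ℝ} {y : Rn m}
    (hxy : PFeas X Y D g H τ x y) (hD : D.Nonempty) {z : Rn m} (hz : z ∈ Y) :
    g (x, y) ≤ g (x, z) + lam * infDist (H (x, z)) D + τ := by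
  have hV0 : ((g (x, y) - τ : ℝ) : EReal) ≤ Vfun Y D g H x 0 :=
    le_iInf₂ fun y' hy' => EReal.coe_le_coe_iff.2
      (by linarith [hxy.2.2.2 y' hy'.1 (by simpa using hy'.2)])
  have hu (u : Q) (hu : H (x, z) + u ∈ D) : g (x, y) - τ - g (x, z) ≤ lam * ‖u‖ := by
    have hVu : Vfun Y D g H x u ≤ g (x, z) := iInf₂_le z ⟨hz, hu⟩
    have := (hV0.trans ((EReal.sub_le_iff_le_add (Or.inl (EReal.coe_ne_bot _))
      (Or.inl (EReal.coe_ne_top _))).1 (hcalm.2 u))).trans (add_le_add hVu le_rfl)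
    rw [← EReal.coe_add, EReal.coe_le_coe_iff] at this
    linarith
  linarith [le_mul_infDist_of_forall_add_mem hD hcalm.1 hu]

end CalmAtWith

namespace BasicAssumption

variable {X : Set (Rn n)} {Y : Set (Rn m)} {D : Set Q} {Yν : ℕ → Set (Rn m)}
  {f : Rn n × Rn m → EReal} {fν : ℕ → Rn n × Rn m → EReal}
  {g : Rn n × Rn m → ℝ} {gν : ℕ → Rn n × Rn m → ℝ}
  {H : Rn n × Rn m → Q} {Hν : ℕ → Rn n × Rn m → Q}
  {σ θ lamBar τν δ η : ℕ → ℝ} {τ : ℝ}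

theorem δ_nonneg (ba : BasicAssumption X Y D Yν f fν g gν H Hν σ θ lamBar τν δ η) (ν : ℕ) :
    0 ≤ δ ν := by
  obtain ⟨⟨x, hx⟩, ⟨y, hy⟩⟩ := And.intro ba.X_nonempty ba.Y_nonempty
  exact (abs_nonneg _).trans (ba.g_err ν x hx y hy)

theorem η_nonneg (ba : BasicAssumption X Y D Yν f fν g gν H Hν σ θ lamBar τν δ η) (ν : ℕ) :
    0 ≤ η ν := by
  obtain ⟨⟨x, hx⟩, ⟨y, hy⟩⟩ := And.intro ba.X_nonempty ba.Y_nonempty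
  exact (abs_nonneg _).trans (ba.H_err ν x hx y hy)

theorem tendsto_θ_mul_η (ba : BasicAssumption X Y D Yν f fν g gν H Hν σ θ lamBar τν δ η) :
    Tendsto (fun ν => θ ν * η ν) atTop (𝓝 0) :=
  tendsto_zero_of_mul_le ba.lamBar_top
    (Eventually.of_forall fun ν => mul_nonneg (ba.θ_nonneg ν) (ba.η_nonneg ν))
    ((ba.θlamη_lim.eventually (ge_mem_nhds one_pos)).mono fun ν h =>
      (by ring : lamBar ν * (θ ν * η ν) = θ ν * lamBar ν * η ν).trans_le h)

theorem tendsto_fν (ba : BasicAssumption X Y D Yν f fν g gν H Hν σ θ lamBar τν δ η)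
    {x : Rn n} {y : Rn m} (hx : x ∈ X) (hy : y ∈ Y) :
    Tendsto (fun ν => fν ν (x, y)) atTop (𝓝 (f (x, y))) :=
  tendsto_of_le_liminf_of_limsup_le
    (ba.f_liminf x hx y hy _ _ (fun _ => hx) (fun _ => hy) tendsto_const_nhds tendsto_const_nhds)
    (ba.f_limsup x hx y hy)

/-- The subsequence is completed to a full sequence by filling the gaps with the limit point. -/
theorem le_liminf_of_subseq (ba : BasicAssumption X Y D Yν f fν g gν H Hν σ θ lamBar τν δ η)
    {s : ℕ → ℕ} (hs : StrictMono s) {xs : ℕ → Rn n} {ys : ℕ → Rn m} {x : Rn n} {y : Rn m}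
    (hx : x ∈ X) (hy : y ∈ Y) (hxsX : ∀ k, xs k ∈ X) (hysY : ∀ k, ys k ∈ Y)
    (hxs : Tendsto xs atTop (𝓝 x)) (hys : Tendsto ys atTop (𝓝 y)) :
    f (x, y) ≤ liminf (fun k => fν (s k) (xs k, ys k)) atTop := by
  set xe := Function.extend s xs fun _ => x
  set ye := Function.extend s ys fun _ => y
  calc f (x, y) ≤ liminf (fun ν => fν ν (xe ν, ye ν)) atTop :=
        ba.f_liminf x hx y hy xe ye (extend_const_mem hxsX hx) (extend_const_mem hysY hy)
          (tendsto_extend_const_of_strictMono hs hxs) (tendsto_extend_const_of_strictMono hs hys)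
    _ ≤ liminf ((fun ν => fν ν (xe ν, ye ν)) ∘ s) atTop :=
        (liminf_le_liminf_of_le hs.tendsto_atTop).trans_eq (liminf_comp _ _ _).symm
    _ = liminf (fun k => fν (s k) (xs k, ys k)) atTop := by
        simp only [Function.comp_def, xe, ye, hs.injective.extend_apply]

theorem exists_tendsto_mem_Yν (ba : BasicAssumption X Y D Yν f fν g gν H Hν σ θ lamBar τν δ η)
    {z : Rn m} (hz : z ∈ Y) : ∃ zs : ℕ → Rn m, (∀ ν, zs ν ∈ Yν ν) ∧ Tendsto zs atTop (𝓝 z) :=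
  exists_tendsto_of_tendsto_infDist ba.Yν_nonempty (infDist_zero_of_mem hz ▸ ba.Yν_conv z)


section Limits

variable {s : ℕ → ℕ} {xs : ℕ → Rn n} {ys : ℕ → Rn m} {us : ℕ → Q} {αs ls : ℕ → ℝ}
  {x : Rn n} {y : Rn m}

theorem mem_of_tendsto_pnuFeas (ba : BasicAssumption X Y D Yν f fν g gν H Hν σ θ lamBar τν δ η)
    (hs : Tendsto s atTop atTop)
    (hfeas : ∀ k, PnuFeas X Y D (Yν (s k)) (gν (s k)) (Hν (s k)) (lamBar (s k)) (τν (s k))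
      (xs k) (ys k) (us k) (αs k) (ls k))
    (hx : x ∈ X) (hy : y ∈ Y) (hxs : Tendsto xs atTop (𝓝 x)) (hys : Tendsto ys atTop (𝓝 y))
    (hus : Tendsto us atTop (𝓝 0)) : H (x, y) ∈ D := by
  have hlim : Tendsto (fun k => infDist (H (xs k, ys k)) D) atTop (𝓝 (infDist (H (x, y)) D)) :=
    ((continuous_infDist_pt D).tendsto _).comp (ba.H_cont.tendsto_comp_prodMk hx hy
      (fun k => (hfeas k).1) (fun k => (hfeas k).2.1) hxs hys)
  have hbound (k : ℕ) : infDist (H (xs k, ys k)) D ≤ ‖us k‖ + η (s k) := by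
    have h1 := (infDist_le_dist_of_mem (hfeas k).2.2.2.2.2.1).trans_eq (dist_self_add_right _ _)
    have h2 := (abs_le.1 (ba.H_err (s k) _ (hfeas k).1 _ (hfeas k).2.1)).1
    linarith
  have h0 : Tendsto (fun k => ‖us k‖ + η (s k)) atTop (𝓝 0) := by
    simpa using hus.norm.add (ba.η_lim.comp hs)
  rw [ba.D_closed.mem_iff_infDist_zero ba.D_nonempty]
  exact le_antisymm (le_of_tendsto_of_tendsto' hlim h0 hbound) infDist_nonneg

theorem le_add_mul_infDist_of_tendsto_pnuFeas
    (ba : BasicAssumption X Y D Yν f fν g gν H Hν σ θ lamBar τν δ η)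
    (hτν : Tendsto τν atTop (𝓝 τ)) (hs : Tendsto s atTop atTop)
    (hfeas : ∀ k, PnuFeas X Y D (Yν (s k)) (gν (s k)) (Hν (s k)) (lamBar (s k)) (τν (s k))
      (xs k) (ys k) (us k) (αs k) (ls k))
    (hx : x ∈ X) (hy : y ∈ Y) (hxs : Tendsto xs atTop (𝓝 x)) (hys : Tendsto ys atTop (𝓝 y))
    {l : ℝ} (hαs : Tendsto αs atTop (𝓝 0)) (hls : Tendsto ls atTop (𝓝 l)) {z : Rn m}
    (hz : z ∈ Y) : g (x, y) ≤ g (x, z) + l * infDist (H (x, z)) D + τ := by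
  obtain ⟨zs, hzYν, hzs⟩ := ba.exists_tendsto_mem_Yν hz
  have hzY (k : ℕ) : zs (s k) ∈ Y := ba.Yν_subset _ (hzYν _)
  have hxsX (k : ℕ) : xs k ∈ X := (hfeas k).1
  have hgy := ba.g_cont.tendsto_comp_prodMk hx hy hxsX (fun k => (hfeas k).2.1) hxs hys
  have hgz := ba.g_cont.tendsto_comp_prodMk hx hz hxsX hzY hxs (hzs.comp hs)
  have hHz := ((continuous_infDist_pt D).tendsto _).comp
    (ba.H_cont.tendsto_comp_prodMk hx hz hxsX hzY hxs (hzs.comp hs))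
  have hconstraint (k : ℕ) :
      g (xs k, ys k) + (αs k - (2 * δ (s k) + ls k * η (s k))) ≤
        g (xs k, zs (s k)) + ls k * infDist (H (xs k, zs (s k))) D + τν (s k) :=
    add_sub_le_add_mul_add_of_abs_sub_le
      ((abs_sub_comm _ _).trans_le (ba.g_err _ _ (hxsX k) _ (hfeas k).2.1))
      ((abs_sub_comm _ _).trans_le (ba.g_err _ _ (hxsX k) _ (hzY k)))
      ((abs_sub_comm _ _).trans_le (ba.H_err _ _ (hxsX k) _ (hzY k)))
      (hfeas k).2.2.2.1 ((hfeas k).2.2.2.2.2.2 _ (hzYν _))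
  refine le_of_tendsto_of_tendsto' ?_ ((hgz.add (hls.mul hHz)).add (hτν.comp hs)) hconstraint
  simpa using hgy.add (hαs.sub (((ba.δ_lim.comp hs).const_mul 2).add
    (hls.mul (ba.η_lim.comp hs))))

/-- The objective bound `c < ⊤` together with `σ^ν, θ^ν → ∞` forces `u → 0` and `α → 0`. -/
theorem pFeas_and_le_of_tendsto (ba : BasicAssumption X Y D Yν f fν g gν H Hν σ θ lamBar τν δ η)
    (hτν : Tendsto τν atTop (𝓝 τ)) (hσ : Tendsto σ atTop atTop) (hθ : Tendsto θ atTop atTop)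
    (hs : StrictMono s)
    (hfeas : ∀ k, PnuFeas X Y D (Yν (s k)) (gν (s k)) (Hν (s k)) (lamBar (s k)) (τν (s k))
      (xs k) (ys k) (us k) (αs k) (ls k))
    {u : Q} {α l : ℝ}
    (hconv : Tendsto (fun k => (xs k, ys k, us k, αs k, ls k)) atTop (𝓝 (x, y, u, α, l)))
    {c : EReal} (hc : c ≠ ⊤)
    (hobj : ∀ k, PnuObj (fν (s k)) (σ (s k)) (θ (s k)) (xs k) (ys k) (us k) (αs k) ≤ c) :
    PFeas X Y D g H τ x y ∧ f (x, y) ≤ c := by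
  have hxs : Tendsto xs atTop (𝓝 x) := hconv.fst_nhds
  have hys : Tendsto ys atTop (𝓝 y) := hconv.snd_nhds.fst_nhds
  have hls : Tendsto ls atTop (𝓝 l) := hconv.snd_nhds.snd_nhds.snd_nhds.snd_nhds
  have hx : x ∈ X := ba.X_closed.mem_of_tendsto hxs (Eventually.of_forall fun k => (hfeas k).1)
  have hy : y ∈ Y := ba.Y_closed.mem_of_tendsto hys (Eventually.of_forall fun k => (hfeas k).2.1)
  have hσu (k : ℕ) : 0 ≤ σ (s k) * ‖us k‖ := mul_nonneg (ba.σ_nonneg _) (norm_nonneg _)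
  have hθα (k : ℕ) : 0 ≤ θ (s k) * -αs k :=
    mul_nonneg (ba.θ_nonneg _) (neg_nonneg.2 (hfeas k).2.2.1)
  have hf : f (x, y) ≤ liminf (fun k => fν (s k) (xs k, ys k)) atTop :=
    ba.le_liminf_of_subseq hs hx hy (fun k => (hfeas k).1) (fun k => (hfeas k).2.1) hxs hys
  have hfc : f (x, y) ≤ c := by
    refine hf.trans ((liminf_le_liminf (Eventually.of_forall fun k => ?_)).trans_eq (liminf_const c))
    refine le_trans ?_ (hobj k)
    exact le_add_of_nonneg_right (EReal.coe_nonneg.2 (by linarith [hσu k, hθα k]))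
  obtain ⟨C, hC⟩ := EReal.exists_eventually_le_of_add_le
    (p := fun k => σ (s k) * ‖us k‖ - θ (s k) * αs k) hc
    ((bot_lt_iff_ne_bot.2 (ba.f_ne_bot _)).trans_le hf) hobj
  have hus : Tendsto us atTop (𝓝 0) := tendsto_zero_iff_norm_tendsto_zero.2 <|
    tendsto_zero_of_mul_le (hσ.comp hs.tendsto_atTop) (Eventually.of_forall fun _ => norm_nonneg _)
      (hC.mono fun k hk => by simp only [Function.comp_apply]; linarith [hθα k])
  have hαs : Tendsto αs atTop (𝓝 0) := by
    simpa using (tendsto_zero_of_mul_le (hθ.comp hs.tendsto_atTop)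
      (Eventually.of_forall fun k => neg_nonneg.2 (hfeas k).2.2.1)
      (hC.mono fun k hk => by simp only [Function.comp_apply]; linarith [hσu k])).neg
  refine ⟨⟨hx, hy, ba.mem_of_tendsto_pnuFeas hs.tendsto_atTop hfeas hx hy hxs hys hus,
    fun z hz hzD => ?_⟩, hfc⟩
  simpa [infDist_zero_of_mem hzD] using
    ba.le_add_mul_infDist_of_tendsto_pnuFeas hτν hs.tendsto_atTop hfeas hx hy hxs hys hαs hls hz

end Limits

theorem PVal_le_liminf_PnuVal (ba : BasicAssumption X Y D Yν f fν g gν H Hν σ θ lamBar τν δ η)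
    (hτν : Tendsto τν atTop (𝓝 τ)) (hσ : Tendsto σ atTop atTop) (hθ : Tendsto θ atTop atTop)
    {B : Set (Rn n × Rn m × Q × ℝ × ℝ)} (hB : IsCompact B)
    {wx : ℕ → Rn n} {wy : ℕ → Rn m} {wu : ℕ → Q} {wα wl : ℕ → ℝ}
    (hwB : ∀ ν, (wx ν, wy ν, wu ν, wα ν, wl ν) ∈ B)
    (hw : ∀ ν, PnuEps X Y D (Yν ν) (fν ν) (gν ν) (Hν ν) (σ ν) (θ ν) (lamBar ν) (τν ν) 0
      (wx ν) (wy ν) (wu ν) (wα ν) (wl ν)) :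
    PVal X Y D f g H τ ≤
      liminf (fun ν => PnuVal X Y D (Yν ν) (fν ν) (gν ν) (Hν ν) (σ ν) (θ ν) (lamBar ν) (τν ν))
        atTop := by
  by_contra! hlt
  obtain ⟨c, hlc, hcP⟩ := exists_between hlt
  obtain ⟨φ, hφ, hφc⟩ := extraction_of_frequently_atTop
    (frequently_lt_of_liminf_lt (by isBoundedDefault) hlc)
  obtain ⟨⟨x, y, u, α, l⟩, -, ψ, hψ, hconv⟩ := hB.tendsto_subseq fun k => hwB (φ k)
  have hobj (k : ℕ) : PnuObj (fν (φ (ψ k))) (σ (φ (ψ k))) (θ (φ (ψ k))) (wx (φ (ψ k)))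
      (wy (φ (ψ k))) (wu (φ (ψ k))) (wα (φ (ψ k))) ≤ c := by
    have h := (hw (φ (ψ k))).2.2
    rw [EReal.coe_zero, add_zero] at h
    exact h.trans (hφc _).le
  obtain ⟨hfeas, hfc⟩ := ba.pFeas_and_le_of_tendsto hτν hσ hθ (hφ.comp hψ) (fun k => (hw _).1)
    hconv hcP.ne_top hobj
  exact (hcP.trans_le ((iInf_le_of_le x <| iInf_le_of_le y <| iInf_le _ hfeas).trans hfc)).false

theorem pnuFeas_of_le_add_mul_infDist
    (ba : BasicAssumption X Y D Yν f fν g gν H Hν σ θ lamBar τν δ η)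
    {x : Rn n} {y : Rn m} {lam : ℝ} {ν : ℕ} {u : Q} (hx : x ∈ X) (hy : y ∈ Y)
    (hpen : ∀ z ∈ Y, g (x, y) ≤ g (x, z) + lam * infDist (H (x, z)) D + τ)
    (hlam : 0 ≤ lam) (hlamν : lam ≤ lamBar ν) (hu : Hν ν (x, y) + u ∈ D) :
    PnuFeas X Y D (Yν ν) (gν ν) (Hν ν) (lamBar ν) (τν ν) x y u
      (min 0 (τν ν - τ - (2 * δ ν + lam * η ν))) lam := by
  refine ⟨hx, hy, min_le_left _ _, hlam, hlamν, hu, fun z hz => ?_⟩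
  have hzY := ba.Yν_subset ν hz
  have := add_sub_le_add_mul_add_of_abs_sub_le (ba.g_err ν x hx y hy) (ba.g_err ν x hx z hzY)
    (ba.H_err ν x hx z hzY) hlam
    (show g (x, y) + (τν ν - τ) ≤ g (x, z) + lam * infDist (H (x, z)) D + τν ν by
      linarith [hpen z hzY])
  linarith [min_le_right 0 (τν ν - τ - (2 * δ ν + lam * η ν))]

/-- The witnesses: `u^ν` moves `H^ν(x,y)` into `D` with `‖u^ν‖ ≤ 2η^ν`, and `α^ν ≤ 0` absorbs
the errors `τ^ν - τ`, `δ^ν`, `λη^ν`. -/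
theorem exists_pnuFeas_tendsto (ba : BasicAssumption X Y D Yν f fν g gν H Hν σ θ lamBar τν δ η)
    (hrate : Tendsto (fun ν => θ ν * |τν ν - τ|) atTop (𝓝 0)) (hτν : Tendsto τν atTop (𝓝 τ))
    {x : Rn n} {y : Rn m} {lam : ℝ} (hxy : PFeas X Y D g H τ x y)
    (hcalm : CalmAtWith Y D g H x lam) :
    ∃ (us : ℕ → Q) (αs : ℕ → ℝ),
      (∀ᶠ ν in atTop,
        PnuFeas X Y D (Yν ν) (gν ν) (Hν ν) (lamBar ν) (τν ν) x y (us ν) (αs ν) lam) ∧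
      Tendsto us atTop (𝓝 0) ∧ Tendsto αs atTop (𝓝 0) ∧
      Tendsto (fun ν => PnuObj (fν ν) (σ ν) (θ ν) x y (us ν) (αs ν)) atTop (𝓝 (f (x, y))) := by
  have ⟨hx, hy, hxyD, _⟩ := hxy
  have hdist (ν : ℕ) : infDist (Hν ν (x, y)) D ≤ η ν := by
    simpa [infDist_zero_of_mem hxyD] using (abs_le.1 (ba.H_err ν x hx y hy)).2
  choose us hus husη using fun ν => exists_add_mem_norm_le_two_mul ba.D_closed ba.D_nonempty
    (hdist ν)
  set e : ℕ → ℝ := fun ν => 2 * δ ν + lam * η ν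
  have he : Tendsto e atTop (𝓝 0) := by
    simpa using (ba.δ_lim.const_mul 2).add (ba.η_lim.const_mul lam)
  have hαe (ν : ℕ) : -(|τν ν - τ| + e ν) ≤ min 0 (τν ν - τ - e ν) :=
    le_min (by linarith [abs_nonneg (τν ν - τ), ba.δ_nonneg ν,
      mul_nonneg hcalm.1 (ba.η_nonneg ν)]) (by linarith [neg_abs_le (τν ν - τ)])
  refine ⟨us, fun ν => min 0 (τν ν - τ - e ν), ?_, squeeze_zero_norm husη ?_, ?_, ?_⟩
  · filter_upwards [ba.lamBar_top.eventually_ge_atTop lam] with ν hν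
    exact ba.pnuFeas_of_le_add_mul_infDist hx hy
      (fun z hz => hcalm.le_add_mul_infDist hxy ba.D_nonempty hz) hcalm.1 hν (hus ν)
  · simpa using ba.η_lim.const_mul 2
  · simpa using (tendsto_const_nhds (x := (0 : ℝ))).min ((hτν.sub_const τ).sub he)
  have hbound : Tendsto (fun ν => 2 * (σ ν * η ν) +
      (θ ν * |τν ν - τ| + (2 * (θ ν * δ ν) + lam * (θ ν * η ν)))) atTop (𝓝 0) := by
    simpa using (ba.ση_lim.const_mul 2).add (hrate.add ((ba.θδ_lim.const_mul 2).add
      (ba.tendsto_θ_mul_η.const_mul lam)))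
  refine (ba.tendsto_fν hx hy).add_coe_of_tendsto_zero
    (squeeze_zero (fun ν => ?_) (fun ν => ?_) hbound)
  · nlinarith [mul_nonneg (ba.σ_nonneg ν) (norm_nonneg (us ν)), ba.θ_nonneg ν,
      min_le_left 0 (τν ν - τ - e ν)]
  · nlinarith [mul_le_mul_of_nonneg_left (husη ν) (ba.σ_nonneg ν),
      mul_le_mul_of_nonneg_left (hαe ν) (ba.θ_nonneg ν)]

theorem tendsto_PnuVal (ba : BasicAssumption X Y D Yν f fν g gν H Hν σ θ lamBar τν δ η)
    (hrate : Tendsto (fun ν => θ ν * |τν ν - τ|) atTop (𝓝 0)) (hτν : Tendsto τν atTop (𝓝 τ))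
    (hσ : Tendsto σ atTop atTop) (hθ : Tendsto θ atTop atTop)
    {x : Rn n} {y : Rn m} {lam : ℝ} (hopt : POpt X Y D f g H τ x y)
    (hcalm : CalmAtWith Y D g H x lam) {B : Set (Rn n × Rn m × Q × ℝ × ℝ)} (hB : IsCompact B)
    {wx : ℕ → Rn n} {wy : ℕ → Rn m} {wu : ℕ → Q} {wα wl : ℕ → ℝ}
    (hwB : ∀ ν, (wx ν, wy ν, wu ν, wα ν, wl ν) ∈ B)
    (hw : ∀ ν, PnuEps X Y D (Yν ν) (fν ν) (gν ν) (Hν ν) (σ ν) (θ ν) (lamBar ν) (τν ν) 0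
      (wx ν) (wy ν) (wu ν) (wα ν) (wl ν)) :
    Tendsto (fun ν => PnuVal X Y D (Yν ν) (fν ν) (gν ν) (Hν ν) (σ ν) (θ ν) (lamBar ν) (τν ν))
      atTop (𝓝 (f (x, y))) := by
  obtain ⟨hxy, -, hf_eq⟩ := hopt
  obtain ⟨us, αs, hfeas, -, -, hobj⟩ := ba.exists_pnuFeas_tendsto hrate hτν hxy hcalm
  refine tendsto_of_le_liminf_of_limsup_le (hf_eq ▸ ba.PVal_le_liminf_PnuVal hτν hσ hθ hB hwB hw) ?_
  rw [← hobj.limsup_eq]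
  exact limsup_le_limsup (hfeas.mono fun ν h => PnuVal_le_of_pnuFeas h)

theorem exists_pnuEps_tendsto (ba : BasicAssumption X Y D Yν f fν g gν H Hν σ θ lamBar τν δ η)
    (hrate : Tendsto (fun ν => θ ν * |τν ν - τ|) atTop (𝓝 0)) (hτν : Tendsto τν atTop (𝓝 τ))
    {x : Rn n} {y : Rn m} {lam : ℝ} (hxy : PFeas X Y D g H τ x y) (hfxy : f (x, y) ≠ ⊤)
    (hcalm : CalmAtWith Y D g H x lam)
    (hm : Tendsto (fun ν => PnuVal X Y D (Yν ν) (fν ν) (gν ν) (Hν ν) (σ ν) (θ ν) (lamBar ν) (τν ν))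
      atTop (𝓝 (f (x, y))))
    {wx : ℕ → Rn n} {wy : ℕ → Rn m} {wu : ℕ → Q} {wα wl : ℕ → ℝ}
    (hw : ∀ ν, PnuEps X Y D (Yν ν) (fν ν) (gν ν) (Hν ν) (σ ν) (θ ν) (lamBar ν) (τν ν) 0
      (wx ν) (wy ν) (wu ν) (wα ν) (wl ν)) :
    ∃ (ε : ℕ → ℝ) (xs : ℕ → Rn n) (ys : ℕ → Rn m) (us : ℕ → Q) (αs lams : ℕ → ℝ),
      (∀ ν, 0 ≤ ε ν) ∧ Tendsto ε atTop (𝓝 0) ∧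
      (∀ ν, PnuEps X Y D (Yν ν) (fν ν) (gν ν) (Hν ν)
        (σ ν) (θ ν) (lamBar ν) (τν ν) (ε ν) (xs ν) (ys ν) (us ν) (αs ν) (lams ν)) ∧
      Tendsto xs atTop (𝓝 x) ∧ Tendsto ys atTop (𝓝 y) ∧
      Tendsto us atTop (𝓝 (0 : Q)) ∧ Tendsto αs atTop (𝓝 (0 : ℝ)) ∧
      Tendsto lams atTop (𝓝 lam) := by
  obtain ⟨us, αs, hfeas, hus, hαs, hobj⟩ := ba.exists_pnuFeas_tendsto hrate hτν hxy hcalm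
  rw [← EReal.coe_toReal hfxy (ba.f_ne_bot _)] at hobj hm
  obtain ⟨ε, hε0, hε, hle⟩ := EReal.exists_le_add_of_tendsto hobj hm
  obtain ⟨N, hN⟩ := eventually_atTop.1
    (hfeas.and ((hobj.eventually_ne (EReal.coe_ne_top _)).and hle))
  refine ⟨fun ν => if N ≤ ν then ε ν else 0, fun ν => if N ≤ ν then x else wx ν,
    fun ν => if N ≤ ν then y else wy ν, fun ν => if N ≤ ν then us ν else wu ν,
    fun ν => if N ≤ ν then αs ν else wα ν, fun ν => if N ≤ ν then lam else wl ν,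
    fun ν => ?_, tendsto_ite_le_of_tendsto N hε, fun ν => ?_,
    tendsto_ite_le_of_tendsto N tendsto_const_nhds, tendsto_ite_le_of_tendsto N tendsto_const_nhds,
    tendsto_ite_le_of_tendsto N hus, tendsto_ite_le_of_tendsto N hαs,
    tendsto_ite_le_of_tendsto N tendsto_const_nhds⟩
  · dsimp only
    split_ifs
    exacts [hε0 ν, le_rfl]
  · dsimp only
    split_ifs with hν
    exacts [hN ν hν, hw ν]

end BasicAssumption

theorem Pnu_recovers_calm_optimal_general
    (X : Set (Rn n)) (Y : Set (Rn m)) (D : Set Q) (Yν : ℕ → Set (Rn m))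
    (f : Rn n × Rn m → EReal) (fν : ℕ → Rn n × Rn m → EReal)
    (g : Rn n × Rn m → ℝ) (gν : ℕ → Rn n × Rn m → ℝ)
    (H : Rn n × Rn m → Q) (Hν : ℕ → Rn n × Rn m → Q)
    (σ θ lamBar τν δ η : ℕ → ℝ) (τ : ℝ)
    (ba : BasicAssumption X Y D Yν f fν g gν H Hν σ θ lamBar τν δ η)
    (hrate : Tendsto (fun ν => θ ν * |τν ν - τ|) atTop (𝓝 0))
    (hσ : Tendsto σ atTop atTop) (hθ : Tendsto θ atTop atTop)
    (xstar : Rn n) (ystar : Rn m) (lamstar : ℝ)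
    (hopt : POpt X Y D f g H τ xstar ystar)
    (hcalm : CalmAtWith Y D g H xstar lamstar)
    (B : Set (Rn n × Rn m × Q × ℝ × ℝ)) (hB : IsCompact B)
    (hoptν : ∀ ν, ∃ (x : Rn n) (y : Rn m) (u : Q) (α lam : ℝ),
      (x, y, u, α, lam) ∈ B ∧
      PnuEps X Y D (Yν ν) (fν ν) (gν ν) (Hν ν) (σ ν) (θ ν) (lamBar ν) (τν ν) 0
        x y u α lam) :
    (∀ lam : ℝ, lamstar ≤ lam →
      ∃ (ε : ℕ → ℝ) (xs : ℕ → Rn n) (ys : ℕ → Rn m) (us : ℕ → Q) (αs lams : ℕ → ℝ),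
        (∀ ν, 0 ≤ ε ν) ∧ Tendsto ε atTop (𝓝 0) ∧
        (∀ ν, PnuEps X Y D (Yν ν) (fν ν) (gν ν) (Hν ν)
          (σ ν) (θ ν) (lamBar ν) (τν ν) (ε ν) (xs ν) (ys ν) (us ν) (αs ν) (lams ν)) ∧
        Tendsto xs atTop (𝓝 xstar) ∧ Tendsto ys atTop (𝓝 ystar) ∧
        Tendsto us atTop (𝓝 (0 : Q)) ∧ Tendsto αs atTop (𝓝 (0 : ℝ)) ∧
        Tendsto lams atTop (𝓝 lam)) ∧
    ∃ r : ℝ, PVal X Y D f g H τ = (r : EReal) ∧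
      Tendsto (fun ν =>
        PnuVal X Y D (Yν ν) (fν ν) (gν ν) (Hν ν) (σ ν) (θ ν) (lamBar ν) (τν ν)) atTop
        (𝓝 ((r : EReal))) := by
  choose wx wy wu wα wl hwB hw using hoptν
  have hτν : Tendsto τν atTop (𝓝 τ) := tendsto_iff_norm_sub_tendsto_zero.2 <|
    tendsto_zero_of_mul_le hθ (Eventually.of_forall fun _ => norm_nonneg _)
      (hrate.eventually (ge_mem_nhds one_pos))
  have hm := ba.tendsto_PnuVal hrate hτν hσ hθ hopt hcalm hB hwB hw
  obtain ⟨hxy, hf_top, hf_eq⟩ := hopt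
  have hf_real := EReal.coe_toReal hf_top (ba.f_ne_bot (xstar, ystar))
  refine ⟨fun lam hlam => ba.exists_pnuEps_tendsto hrate hτν hxy hf_top (hcalm.mono hlam) hm hw,
    (f (xstar, ystar)).toReal, by rw [hf_real, hf_eq], hf_real ▸ hm⟩

/-- Theorem 2.5(b): recovery of any calm optimal solution of (P) by near-optimal
solutions of (P)^ν, and convergence of the minimum values `𝔪^ν → 𝔪 ∈ ℝ`. -/
theorem Pnu_recovers_calm_optimal
    [NormedSpace ℝ Q] [FiniteDimensional ℝ Q]
    (X : Set (Rn n)) (Y : Set (Rn m)) (D : Set Q) (Yν : ℕ → Set (Rn m))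
    (f : Rn n × Rn m → EReal) (fν : ℕ → Rn n × Rn m → EReal)
    (g : Rn n × Rn m → ℝ) (gν : ℕ → Rn n × Rn m → ℝ)
    (H : Rn n × Rn m → Q) (Hν : ℕ → Rn n × Rn m → Q)
    (σ θ lamBar τν δ η : ℕ → ℝ) (τ : ℝ) (hτ : 0 ≤ τ)
    (ba : BasicAssumption X Y D Yν f fν g gν H Hν σ θ lamBar τν δ η)
    (hrate : Tendsto (fun ν => θ ν * |τν ν - τ|) atTop (𝓝 0))
    (hσ : Tendsto σ atTop atTop) (hθ : Tendsto θ atTop atTop)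
    (xstar : Rn n) (ystar : Rn m) (lamstar : ℝ)
    (hopt : POpt X Y D f g H τ xstar ystar)
    (hcalm : CalmAtWith Y D g H xstar lamstar)
    (B : Set (Rn n × Rn m × Q × ℝ × ℝ)) (hB : IsCompact B)
    (hoptν : ∀ ν, ∃ (x : Rn n) (y : Rn m) (u : Q) (α lam : ℝ),
      (x, y, u, α, lam) ∈ B ∧
      PnuEps X Y D (Yν ν) (fν ν) (gν ν) (Hν ν) (σ ν) (θ ν) (lamBar ν) (τν ν) 0
        x y u α lam) :
    (∀ lam : ℝ, lamstar ≤ lam →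
      ∃ (ε : ℕ → ℝ) (xs : ℕ → Rn n) (ys : ℕ → Rn m) (us : ℕ → Q) (αs lams : ℕ → ℝ),
        (∀ ν, 0 ≤ ε ν) ∧ Tendsto ε atTop (𝓝 0) ∧
        (∀ ν, PnuEps X Y D (Yν ν) (fν ν) (gν ν) (Hν ν)
          (σ ν) (θ ν) (lamBar ν) (τν ν) (ε ν) (xs ν) (ys ν) (us ν) (αs ν) (lams ν)) ∧
        Tendsto xs atTop (𝓝 xstar) ∧ Tendsto ys atTop (𝓝 ystar) ∧
        Tendsto us atTop (𝓝 (0 : Q)) ∧ Tendsto αs atTop (𝓝 (0 : ℝ)) ∧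
        Tendsto lams atTop (𝓝 lam)) ∧
    ∃ r : ℝ, PVal X Y D f g H τ = (r : EReal) ∧
      Tendsto (fun ν =>
        PnuVal X Y D (Yν ν) (fν ν) (gν ν) (Hν ν) (σ ν) (θ ν) (lamBar ν) (τν ν)) atTop
        (𝓝 ((r : EReal))) :=
  Pnu_recovers_calm_optimal_general X Y D Yν f fν g gν H Hν σ θ lamBar τν δ η τ ba hrate hσ hθ xstar
    ystar lamstar hopt hcalm B hB hoptν
end
end
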